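/- For any integer n > 0, the complete graph K_n on n vertices is isomorphic to the rook equivalence graph G(B) of the Ferrers board B = (0, 1, 2, …, n−1, n−1) with n+1 columns (column heights b_i = i−1 for 1 ≤ i ≤ n and b_{n+1} = n−1). -/

import Mathlib

/-!
Goldman–Joichi–White: for a Ferrers board `b` with `m` columns,
`∏ i, (x + b i - i) = ∑ k, r_k(b) * x (x - 1) ⋯ (x - m + k + 1)`. Both sides count placements of
`m` rooks on `b` with `x` full rows added underneath: the left side column by column (the rooks of
the `i` earlier, shorter columns block `i` rows of column `i`), the right side by the part of the
placement lying in `b`. The falling factorials are linearly independent, so two Ferrers boards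
with `m` columns are rook equivalent iff these products agree for all `x`, i.e. iff their root
vectors `(i - b i)` agree as multisets. The root vector of `(0, 1, …, n - 1, n - 1)` has `n` zeros
and a single `1`, so its class consists of the `n` staircases `(0, 1, …, n)` with one nonzero
column lowered by one square, and any two of them differ by moving a single square.
-/

/-- A (non-attacking) rook placement on the board with column heights `b`:
a set of cells (column, row) inside the board, no two sharing a column or a row.
Cells are 0-indexed: cell `(i, j)` lies in the board iff `j < b i`. -/
def IsRookPlacement {n : ℕ} (b : Fin n → ℕ) (P : Finset (Fin n × ℕ)) : Prop :=
  (∀ c ∈ P, c.2 < b c.1) ∧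
  ∀ c ∈ P, ∀ d ∈ P, c ≠ d → c.1 ≠ d.1 ∧ c.2 ≠ d.2

/-- The `k`-th rook number of the board `b`: the number of placements of `k`
non-attacking rooks on `b`. -/
noncomputable def rookNum {n : ℕ} (b : Fin n → ℕ) (k : ℕ) : ℕ :=
  Set.ncard {P : Finset (Fin n × ℕ) | IsRookPlacement b P ∧ P.card = k}

/-- Two boards are rook equivalent if all their rook numbers agree. -/
def RookEquiv {n₁ n₂ : ℕ} (b₁ : Fin n₁ → ℕ) (b₂ : Fin n₂ → ℕ) : Prop :=
  ∀ k, rookNum b₁ k = rookNum b₂ k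

/-- The root vector of a board: the (0-indexed) `i`-th entry is `i - b i`
(1-indexed: `(i-1) - b_i`). -/
def rootVec {n : ℕ} (b : Fin n → ℕ) : Fin n → ℤ := fun i => (i : ℤ) - (b i : ℤ)

/-- `b₁` is obtained from `b₂` by moving `k > 0` squares out of one column into a
single other column: the boards agree except in columns `i` and `j`, where `b₁`
has `k` more squares in column `i` and `k` fewer in column `j`. -/
def MovesSquares {n : ℕ} (b₁ b₂ : Fin n → ℕ) : Prop :=
  ∃ (i j : Fin n) (k : ℕ), i ≠ j ∧ 0 < k ∧ b₁ i = b₂ i + k ∧ b₂ j = b₁ j + k ∧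
    ∀ l, l ≠ i → l ≠ j → b₁ l = b₂ l

/-- A Ferrers board with `n` columns: a weakly increasing sequence of column heights. -/
def FerrersBoard (n : ℕ) : Type := {b : Fin n → ℕ // Monotone b}

/-- The rook equivalence graph of the equivalence class of `B`: vertices are the
Ferrers boards with `n` columns rook equivalent to `B`; two distinct boards are
adjacent when one is obtained from the other by moving squares out of one column
into a single other column. -/
def rookEquivGraph {n : ℕ} (B : FerrersBoard n) :
    SimpleGraph {C : FerrersBoard n // RookEquiv C.1 B.1} :=
  SimpleGraph.fromRel fun C D => MovesSquares C.1.1 D.1.1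

/-- `entryCount b k` is `v_k`, the number of entries of the root vector of `b`
equal to `k`. -/
def entryCount {n : ℕ} (b : Fin n → ℕ) (k : ℕ) : ℕ :=
  (Finset.univ.filter fun l => rootVec b l = (k : ℤ)).card

open Finset Polynomial

section

variable {m : ℕ}

open Classical in
def injectionsBelow (c : Fin m → ℕ) : Finset (Fin m → ℕ) :=
  {f ∈ Fintype.piFinset fun i => range (c i) | Function.Injective f}

@[simp]
lemma mem_injectionsBelow {c f : Fin m → ℕ} :
    f ∈ injectionsBelow c ↔ (∀ i, f i < c i) ∧ Function.Injective f := by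
  simp [injectionsBelow]

lemma card_injectionsBelow_succ {c : Fin (m + 1) → ℕ}
    (hc : ∀ i, c (Fin.castSucc i) ≤ c (Fin.last m)) :
    #(injectionsBelow c) = #(injectionsBelow (Fin.init c)) * (c (Fin.last m) - m) := by
  classical
  let extensions (f : Fin m → ℕ) := range (c (Fin.last m)) \ univ.image f
  have hext : ∀ f ∈ injectionsBelow (Fin.init c), #(extensions f) = c (Fin.last m) - m := by
    intro f hf
    have himage : univ.image f ⊆ range (c (Fin.last m)) := by
      simp only [subset_iff, mem_image, mem_univ, true_and, mem_range, forall_exists_index]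
      rintro _ i rfl
      exact ((mem_injectionsBelow.1 hf).1 i).trans_le (hc i)
    rw [card_sdiff_of_subset himage, card_range,
      card_image_of_injective _ (mem_injectionsBelow.1 hf).2, card_univ, Fintype.card_fin]
  rw [← sum_const_nat hext, ← card_sigma]
  refine card_nbij' (fun f => ⟨Fin.init f, f (Fin.last m)⟩) (fun e => Fin.snoc e.1 e.2)
    ?_ ?_ (fun f _ => Fin.snoc_init_self f) (fun e _ => by simp)
  · intro f hf
    obtain ⟨hlt, hinj⟩ := mem_injectionsBelow.1 hf
    rw [← Fin.snoc_init_self f, Fin.snoc_injective_iff] at hinj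
    simp only [coe_sigma, Set.mem_sigma_iff, mem_coe, mem_injectionsBelow, extensions, mem_sdiff,
      mem_range, mem_image, mem_univ, true_and]
    exact ⟨⟨fun i => hlt _, hinj.1⟩, hlt _, hinj.2⟩
  · rintro ⟨f, v⟩ hfv
    simp only [coe_sigma, Set.mem_sigma_iff, mem_coe, mem_injectionsBelow, extensions, mem_sdiff,
      mem_range, mem_image, mem_univ, true_and] at hfv
    refine mem_injectionsBelow.2
      ⟨Fin.lastCases ?_ fun i => ?_, Fin.snoc_injective_iff.2 ⟨hfv.1.2, hfv.2.2⟩⟩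
    · simpa using hfv.2.1
    · simpa [Fin.init] using hfv.1.1 i

lemma card_injectionsBelow {c : Fin m → ℕ} (hc : Monotone c) :
    #(injectionsBelow c) = ∏ i, (c i - i) := by
  induction m with
  | zero => simp [injectionsBelow, Function.Injective]
  | succ m ih =>
    rw [card_injectionsBelow_succ fun i => hc (Fin.le_last _), Fin.prod_univ_castSucc,
      ih (c := Fin.init c) (hc.comp Fin.strictMono_castSucc.monotone)]
    simp [Fin.init]

open Classical in
/-- Rook placements on `b`, recorded by the row `p i` of the rook in column `i`, if any. -/
def partialPlacements (b : Fin m → ℕ) : Finset (Fin m → Option ℕ) :=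
  {p ∈ Fintype.piFinset fun i => (range (b i)).insertNone |
    ∀ i j r, p i = some r → p j = some r → i = j}

lemma mem_partialPlacements {b : Fin m → ℕ} {p : Fin m → Option ℕ} :
    p ∈ partialPlacements b ↔
      (∀ i r, p i = some r → r < b i) ∧
        ∀ i j r, p i = some r → p j = some r → i = j := by
  simp [partialPlacements, Finset.mem_insertNone]

def numRooks (p : Fin m → Option ℕ) : ℕ := #{i | (p i).isSome}

lemma numRooks_le (p : Fin m → Option ℕ) : numRooks p ≤ m :=
  (card_filter_le _ _).trans_eq (card_fin m)

def cells (p : Fin m → Option ℕ) : Finset (Fin m × ℕ) :=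
  ({i | (p i).isSome} : Finset (Fin m)).image fun i => (i, (p i).getD 0)

@[simp]
lemma mem_cells {p : Fin m → Option ℕ} {c : Fin m × ℕ} :
    c ∈ cells p ↔ p c.1 = some c.2 := by
  obtain ⟨i, r⟩ := c
  simp only [cells, mem_image, mem_filter, mem_univ, true_and, Prod.mk.injEq]
  constructor
  · rintro ⟨i, hi, rfl, rfl⟩
    obtain ⟨r, hr⟩ := Option.isSome_iff_exists.1 hi
    simp [hr]
  · intro h
    exact ⟨i, by simp [h]⟩

lemma cells_injective : Function.Injective (cells (m := m)) := by
  intro p q h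
  funext i
  cases hp : p i with
  | some r => exact (mem_cells.1 (h ▸ mem_cells.2 hp : (i, r) ∈ cells q)).symm
  | none =>
    cases hq : q i with
    | none => rfl
    | some r => simpa [hp] using mem_cells.1 (h.symm ▸ mem_cells.2 hq : (i, r) ∈ cells p)

lemma card_cells (p : Fin m → Option ℕ) : #(cells p) = numRooks p :=
  card_image_of_injective _ fun _ _ h => congrArg Prod.fst h

lemma isRookPlacement_cells {b : Fin m → ℕ} {p : Fin m → Option ℕ}
    (hp : p ∈ partialPlacements b) : IsRookPlacement b (cells p) := by
  obtain ⟨hlt, hinj⟩ := mem_partialPlacements.1 hp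
  refine ⟨fun c hc => hlt _ _ (mem_cells.1 hc),
    fun c hc d hd hcd => ⟨fun h => hcd ?_, fun h => hcd ?_⟩⟩
  · rw [mem_cells] at hc hd
    rw [← h] at hd
    exact Prod.ext h (Option.some.inj (hc.symm.trans hd))
  · rw [mem_cells] at hc hd
    exact Prod.ext (hinj _ _ _ hc (h ▸ hd)) h

lemma exists_cells_eq {b : Fin m → ℕ} {P : Finset (Fin m × ℕ)} (hP : IsRookPlacement b P) :
    ∃ p ∈ partialPlacements b, cells p = P := by
  classical
  obtain ⟨hlt, hdist⟩ := hP
  let p (i : Fin m) : Option ℕ := if h : ∃ r, (i, r) ∈ P then some h.choose else none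
  have hp : ∀ i r, p i = some r ↔ (i, r) ∈ P := by
    intro i r
    by_cases h : ∃ r, (i, r) ∈ P
    · have hrow : ∀ s, (i, s) ∈ P → s = h.choose := fun s hs => by
        by_contra hne
        exact (hdist _ hs _ h.choose_spec (by simp [hne])).1 rfl
      simp only [p, dif_pos h, Option.some.injEq]
      exact ⟨fun hr => hr ▸ h.choose_spec, fun hr => (hrow r hr).symm⟩
    · simp only [p, dif_neg h, reduceCtorEq, false_iff]
      exact fun hr => h ⟨r, hr⟩
  refine ⟨p, mem_partialPlacements.2 ⟨fun i r hr => hlt _ ((hp i r).1 hr), ?_⟩, ?_⟩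
  · intro i j r hi hj
    by_contra hne
    exact (hdist _ ((hp i r).1 hi) _ ((hp j r).1 hj) (by simp [hne])).2 rfl
  · ext ⟨i, r⟩
    rw [mem_cells, hp]

lemma rookNum_eq_card_partialPlacements (b : Fin m → ℕ) (k : ℕ) :
    rookNum b k = #{p ∈ partialPlacements b | numRooks p = k} := by
  have : {P | IsRookPlacement b P ∧ #P = k} =
      cells '' ↑{p ∈ partialPlacements b | numRooks p = k} := by
    ext P
    simp only [Set.mem_ofPred_eq, Set.mem_image, mem_coe, mem_filter]
    constructor
    · rintro ⟨hP, rfl⟩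
      obtain ⟨p, hp, rfl⟩ := exists_cells_eq hP
      exact ⟨p, ⟨hp, (card_cells p).symm⟩, rfl⟩
    · rintro ⟨p, ⟨hp, rfl⟩, rfl⟩
      exact ⟨isRookPlacement_cells hp, card_cells p⟩
  rw [rookNum, this, Set.ncard_image_of_injective _ cells_injective, Set.ncard_coe_finset]

lemma rookNum_eq_zero_of_lt (b : Fin m → ℕ) {k : ℕ} (hk : m < k) : rookNum b k = 0 := by
  rw [rookNum_eq_card_partialPlacements, card_eq_zero, filter_eq_empty_iff]
  exact fun p _ hp => (hp ▸ numRooks_le p).not_gt hk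

/-- A member `f` of `injectionsBelow fun i => x + b i` is a placement of `m` rooks on `b` with `x`
rows added underneath (column `i` holds its rook in row `f i`); `upperPart x f` is the part of
it lying in `b`. -/
def upperPart (x : ℕ) (f : Fin m → ℕ) (i : Fin m) : Option ℕ :=
  if x ≤ f i then some (f i - x) else none

lemma upperPart_eq_none {x : ℕ} {f : Fin m → ℕ} {i : Fin m} :
    upperPart x f i = none ↔ f i < x := by
  simp [upperPart]

lemma upperPart_eq_some {x : ℕ} {f : Fin m → ℕ} {i : Fin m} {r : ℕ} :
    upperPart x f i = some r ↔ f i = x + r := by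
  simp only [upperPart]
  split_ifs <;> simp <;> omega

lemma upperPart_mem_partialPlacements {b f : Fin m → ℕ} {x : ℕ}
    (hf : f ∈ injectionsBelow fun i => x + b i) : upperPart x f ∈ partialPlacements b := by
  obtain ⟨hlt, hinj⟩ := mem_injectionsBelow.1 hf
  refine mem_partialPlacements.2 ⟨fun i r hr => ?_, fun i j r hi hj => hinj ?_⟩
  · have := hlt i
    rw [upperPart_eq_some.1 hr] at this
    omega
  · rw [upperPart_eq_some.1 hi, upperPart_eq_some.1 hj]

def fillEmptyColumns (p : Fin m → Option ℕ) (x : ℕ) (g : {i // p i = none} ↪ Fin x)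
    (i : Fin m) : ℕ :=
  if h : p i = none then g ⟨i, h⟩ else x + (p i).getD 0

section fillEmptyColumns

variable {p : Fin m → Option ℕ} {x : ℕ} (g : {i // p i = none} ↪ Fin x)

lemma fillEmptyColumns_of_eq_none {i : Fin m} (h : p i = none) :
    fillEmptyColumns p x g i = g ⟨i, h⟩ :=
  dif_pos h

lemma fillEmptyColumns_of_eq_some {i : Fin m} {r : ℕ} (h : p i = some r) :
    fillEmptyColumns p x g i = x + r := by
  simp [fillEmptyColumns, h]

lemma fillEmptyColumns_mem_injectionsBelow {b : Fin m → ℕ} (hp : p ∈ partialPlacements b) :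
    fillEmptyColumns p x g ∈ injectionsBelow fun i => x + b i := by
  obtain ⟨hlt, hinj⟩ := mem_partialPlacements.1 hp
  have hg (i) (h : p i = none) := (g ⟨i, h⟩).isLt
  refine mem_injectionsBelow.2 ⟨fun i => ?_, fun i j hij => ?_⟩
  · rcases hi : p i with _ | r
    · rw [fillEmptyColumns_of_eq_none g hi]
      linarith [hg i hi]
    · rw [fillEmptyColumns_of_eq_some g hi]
      linarith [hlt i r hi]
  · rcases hi : p i with _ | r <;> rcases hj : p j with _ | s
    · rw [fillEmptyColumns_of_eq_none g hi, fillEmptyColumns_of_eq_none g hj] at hij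
      simpa using g.injective (Fin.ext hij)
    · rw [fillEmptyColumns_of_eq_none g hi, fillEmptyColumns_of_eq_some g hj] at hij
      linarith [hg i hi]
    · rw [fillEmptyColumns_of_eq_some g hi, fillEmptyColumns_of_eq_none g hj] at hij
      linarith [hg j hj]
    · rw [fillEmptyColumns_of_eq_some g hi, fillEmptyColumns_of_eq_some g hj] at hij
      exact hinj i j r hi (by rw [hj, Nat.add_left_cancel hij.symm])

lemma upperPart_fillEmptyColumns : upperPart x (fillEmptyColumns p x g) = p := by
  funext i
  rcases hi : p i with _ | r
  · simp [upperPart_eq_none, fillEmptyColumns_of_eq_none g hi]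
  · simp [upperPart_eq_some, fillEmptyColumns_of_eq_some g hi]

end fillEmptyColumns

lemma card_subtype_eq_none (p : Fin m → Option ℕ) :
    Fintype.card {i // p i = none} = m - numRooks p := by
  have := card_filter_add_card_filter_not (s := univ) fun i => (p i).isSome
  simp only [Bool.not_eq_true, Option.isSome_eq_false_iff, Option.isNone_iff_eq_none, card_univ,
    Fintype.card_fin] at this
  rw [Fintype.card_subtype, numRooks]
  omega

lemma card_filter_upperPart_eq {b : Fin m → ℕ} {p : Fin m → Option ℕ}
    (hp : p ∈ partialPlacements b) (x : ℕ) :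
    #{f ∈ injectionsBelow (fun i => x + b i) | upperPart x f = p} =
      x.descFactorial (m - numRooks p) := by
  classical
  have hcard : x.descFactorial (m - numRooks p) = Fintype.card ({i // p i = none} ↪ Fin x) := by
    rw [Fintype.card_embedding_eq, Fintype.card_fin, card_subtype_eq_none]
  rw [hcard, ← Fintype.card_coe]
  refine Fintype.card_congr
    { toFun := fun f => ⟨fun i => ⟨f.1 i, ?_⟩, fun i j h => ?_⟩
      invFun := fun g => ⟨fillEmptyColumns p x g, mem_filter.2
        ⟨fillEmptyColumns_mem_injectionsBelow g hp, upperPart_fillEmptyColumns g⟩⟩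
      left_inv := fun f => Subtype.ext (funext fun i => ?_)
      right_inv := fun g =>
        Function.Embedding.ext fun i => Fin.ext (fillEmptyColumns_of_eq_none g i.2) }
  · exact upperPart_eq_none.1 ((congrFun (mem_filter.1 f.2).2 i).trans i.2)
  · exact Subtype.ext ((mem_injectionsBelow.1 (mem_filter.1 f.2).1).2 (Fin.val_eq_of_eq h))
  · have hfi := congrFun (mem_filter.1 f.2).2 i
    dsimp only
    rcases hi : p i with _ | r
    · exact fillEmptyColumns_of_eq_none _ hi
    · rw [fillEmptyColumns_of_eq_some _ hi, upperPart_eq_some.1 (hfi.trans hi)]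

theorem card_injectionsBelow_add_eq_sum (b : Fin m → ℕ) (x : ℕ) :
    #(injectionsBelow fun i => x + b i) =
      ∑ k ∈ range (m + 1), rookNum b k * x.descFactorial (m - k) := by
  classical
  rw [card_eq_sum_card_fiberwise fun f hf => upperPart_mem_partialPlacements hf,
    sum_congr rfl fun p hp => card_filter_upperPart_eq hp x,
    ← sum_fiberwise_of_maps_to fun p _ => mem_range.2 (Nat.lt_succ_of_le (numRooks_le p))]
  refine sum_congr rfl fun k _ => ?_
  rw [rookNum_eq_card_partialPlacements, sum_congr rfl fun p hp => by rw [(mem_filter.1 hp).2],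
    sum_const, smul_eq_mul]

theorem prod_add_sub_eq_sum_rookNum_mul_descFactorial {b : Fin m → ℕ} (hb : Monotone b)
    (x : ℕ) :
    ∏ i, (x + b i - i) = ∑ k ∈ range (m + 1), rookNum b k * x.descFactorial (m - k) := by
  rw [← card_injectionsBelow_add_eq_sum, card_injectionsBelow (monotone_const.add hb)]

lemma eq_of_forall_sum_mul_descFactorial_eq {a a' : ℕ → ℕ}
    (h : ∀ x : ℕ, ∑ k ∈ range (m + 1), a k * x.descFactorial (m - k) =
      ∑ k ∈ range (m + 1), a' k * x.descFactorial (m - k))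
    {k : ℕ} (hk : k ≤ m) : a k = a' k := by
  induction hd : m - k using Nat.strong_induction_on generalizing k with
  | _ d ih =>
    -- at `x = d = m - k` the terms with `m - j > d` vanish and those with `m - j < d` agree
    have hk' : k ∈ range (m + 1) := mem_range.2 (Nat.lt_succ_of_le hk)
    have hrest : ∀ j ∈ (range (m + 1)).erase k,
        a j * d.descFactorial (m - j) = a' j * d.descFactorial (m - j) := by
      intro j hj
      obtain ⟨hjk, hj⟩ := mem_erase.1 hj
      rw [mem_range] at hj
      rcases lt_or_ge d (m - j) with hlt | hle
      · simp [Nat.descFactorial_eq_zero_iff_lt.2 hlt]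
      · rw [ih (m - j) (by omega) (by omega) rfl]
    have hx := h d
    rw [← add_sum_erase _ _ hk', ← add_sum_erase _ _ hk', sum_congr rfl hrest,
      Nat.add_right_cancel_iff, hd, Nat.descFactorial_self] at hx
    exact Nat.eq_of_mul_eq_mul_right d.factorial_pos hx

theorem rookEquiv_iff_forall_prod_eq {b₁ b₂ : Fin m → ℕ} (h₁ : Monotone b₁)
    (h₂ : Monotone b₂) :
    RookEquiv b₁ b₂ ↔ ∀ x : ℕ, ∏ i, (x + b₁ i - i) = ∏ i, (x + b₂ i - i) := by
  simp only [prod_add_sub_eq_sum_rookNum_mul_descFactorial h₁,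
    prod_add_sub_eq_sum_rookNum_mul_descFactorial h₂]
  refine ⟨fun h x => sum_congr rfl fun k _ => by rw [h k], fun h k => ?_⟩
  rcases le_or_gt k m with hk | hk
  · exact eq_of_forall_sum_mul_descFactorial_eq h hk
  · rw [rookNum_eq_zero_of_lt _ hk, rookNum_eq_zero_of_lt _ hk]

def rootMultiset (b : Fin m → ℕ) : Multiset ℤ := univ.val.map (rootVec b)

lemma prod_add_sub_eq_prod_rootMultiset (b : Fin m → ℕ) (x : ℕ) :
    ∏ i, (x + b i - i) = ((rootMultiset b).map fun r => ((x : ℤ) - r).toNat).prod := by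
  rw [rootMultiset, Multiset.map_map, prod_eq_multiset_prod]
  congr 1
  refine Multiset.map_congr rfl fun i _ => ?_
  simp only [Function.comp_apply, rootVec]
  omega

lemma eval_prod_X_sub_C_rootMultiset (b : Fin m → ℕ) {x : ℕ} (hx : m ≤ x) :
    ((rootMultiset b).map (X - C ·)).prod.eval (x : ℤ) =
      ((∏ i, (x + b i - i) : ℕ) : ℤ) := by
  rw [eval_multiset_prod, rootMultiset, Multiset.map_map, Multiset.map_map, Nat.cast_prod,
    prod_eq_multiset_prod]
  refine congrArg _ (Multiset.map_congr rfl fun i _ => ?_)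
  have := i.isLt
  simp only [Function.comp_apply, eval_sub, eval_X, eval_C, rootVec]
  omega

theorem forall_prod_eq_iff_rootMultiset_eq {b₁ b₂ : Fin m → ℕ} :
    (∀ x : ℕ, ∏ i, (x + b₁ i - i) = ∏ i, (x + b₂ i - i)) ↔
      rootMultiset b₁ = rootMultiset b₂ := by
  refine ⟨fun h => ?_, fun h x => by rw [prod_add_sub_eq_prod_rootMultiset, h,
    prod_add_sub_eq_prod_rootMultiset]⟩
  rw [← roots_multiset_prod_X_sub_C (rootMultiset b₁),
    ← roots_multiset_prod_X_sub_C (rootMultiset b₂)]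
  congr 1
  refine eq_of_infinite_eval_eq _ _ ((Set.Ici_infinite (m : ℤ)).mono fun x hx => ?_)
  lift x to ℕ using (Int.natCast_nonneg m).trans hx
  have hx : m ≤ x := by simpa using hx
  simp only [Set.mem_ofPred_eq, eval_prod_X_sub_C_rootMultiset _ hx, h]

theorem rookEquiv_iff_rootMultiset_eq {b₁ b₂ : Fin m → ℕ} (h₁ : Monotone b₁)
    (h₂ : Monotone b₂) :
    RookEquiv b₁ b₂ ↔ rootMultiset b₁ = rootMultiset b₂ :=
  (rookEquiv_iff_forall_prod_eq h₁ h₂).trans forall_prod_eq_iff_rootMultiset_eq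

lemma rootVec_injective : Function.Injective (rootVec (n := m)) := fun b₁ b₂ h =>
  funext fun i => by simpa [rootVec] using congrFun h i

end

section SingleValues

variable {ι M : Type*} [Fintype ι] [DecidableEq ι] [Zero M]

lemma map_univ_val_single_eq (a b : ι) (c : M) :
    univ.val.map (Pi.single a c) = univ.val.map (Pi.single b c) := by
  have : Pi.single a c = Pi.single b c ∘ Equiv.swap a b := by
    funext i
    simp [Pi.single_apply, Equiv.swap_apply_eq_iff]
  rw [this, ← Multiset.map_map, Multiset.map_univ_val_equiv]

lemma exists_eq_single_of_map_univ_val_eq [DecidableEq M] {f : ι → M} {a : ι} {c : M}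
    (hc : c ≠ 0) (h : univ.val.map f = univ.val.map (Pi.single a c)) :
    ∃ j, f = Pi.single j c := by
  have hcount : #{i | c = f i} = #{i | c = (Pi.single a c : ι → M) i} := by
    have := congrArg (Multiset.count c) h
    simp only [Multiset.count_map, ← filter_val] at this
    exact this
  have hsingle : ({i | c = (Pi.single a c : ι → M) i} : Finset ι) = {a} := by
    ext i
    by_cases hi : i = a <;> simp [hi, hc]
  obtain ⟨j, hj⟩ := card_eq_one.1 (hcount.trans (by rw [hsingle, card_singleton]))
  refine ⟨j, funext fun i => ?_⟩
  have hfi : c = f i ↔ i = j := by simpa using Finset.ext_iff.1 hj i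
  by_cases hij : i = j
  · subst hij
    rw [Pi.single_eq_same, ← hfi.2 rfl]
  · obtain ⟨k, -, hk⟩ := Multiset.mem_map.1 (h ▸ Multiset.mem_map_of_mem f (mem_univ_val i))
    have hne : (Pi.single a c : ι → M) k ≠ c := fun h => hij (hfi.1 (hk.symm.trans h).symm)
    rw [Pi.single_eq_of_ne hij, ← hk, Pi.single_apply]
    rw [Pi.single_apply] at hne
    split_ifs at hne ⊢
    exacts [absurd rfl hne, rfl]

end SingleValues

section DippedStaircase

variable {n : ℕ}

def dippedStaircase (t : Fin n) (i : Fin (n + 1)) : ℕ := if i = t.succ then t else i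

lemma dippedStaircase_monotone (t : Fin n) : Monotone (dippedStaircase t) := by
  intro i j hij
  simp only [dippedStaircase, Fin.ext_iff, Fin.val_succ]
  rw [Fin.le_def] at hij
  split_ifs <;> omega

lemma rootVec_dippedStaircase (t : Fin n) :
    rootVec (dippedStaircase t) = Pi.single t.succ 1 := by
  funext i
  by_cases h : i = t.succ
  · subst h
    simp [rootVec, dippedStaircase]
  · simp [rootVec, dippedStaircase, h]

lemma dippedStaircase_injective : Function.Injective (dippedStaircase (n := n)) := by
  intro s t h
  by_contra hst
  have := congrFun h s.succ
  simp [dippedStaircase, hst] at this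

lemma movesSquares_dippedStaircase {s t : Fin n} (hst : s ≠ t) :
    MovesSquares (dippedStaircase s) (dippedStaircase t) := by
  have hst' : s.succ ≠ t.succ := (Fin.succ_injective n).ne hst
  refine ⟨t.succ, s.succ, 1, hst'.symm, one_pos, ?_, ?_, fun l hlt hls => ?_⟩ <;>
    simp [dippedStaircase, hst'.symm, *]

lemma dippedStaircase_eq_min (hn : 0 < n) :
    dippedStaircase (⟨n - 1, by omega⟩ : Fin n) =
      fun i : Fin (n + 1) => min (i : ℕ) (n - 1) := by
  funext i
  have := i.isLt
  simp only [dippedStaircase, Fin.ext_iff, Fin.val_succ]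
  split_ifs <;> omega

theorem rookEquiv_dippedStaircase_iff {b : Fin (n + 1) → ℕ} (hb : Monotone b) (t : Fin n) :
    RookEquiv b (dippedStaircase t) ↔ ∃ s, b = dippedStaircase s := by
  rw [rookEquiv_iff_rootMultiset_eq hb (dippedStaircase_monotone t), rootMultiset, rootMultiset,
    rootVec_dippedStaircase]
  constructor
  · intro h
    obtain ⟨j, hj⟩ := exists_eq_single_of_map_univ_val_eq one_ne_zero h
    obtain ⟨s, rfl⟩ : ∃ s : Fin n, s.succ = j := Fin.exists_succ_eq.2 fun hj0 => by
      have := congrFun hj 0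
      simp [rootVec, hj0] at this
      omega
    exact ⟨s, rootVec_injective (hj.trans (rootVec_dippedStaircase s).symm)⟩
  · rintro ⟨s, rfl⟩
    rw [rootVec_dippedStaircase]
    exact map_univ_val_single_eq _ _ _

end DippedStaircase

/-- for `n > 0`, the complete graph `K_n` is isomorphic to the rook
equivalence graph of the Ferrers board `(0, 1, …, n-1, n-1)` with `n + 1` columns
(0-indexed column heights `b i = min i (n - 1)`). -/
theorem stmt5 (n : ℕ) (hn : 0 < n) (B : FerrersBoard (n + 1))
    (hB : B.1 = fun i : Fin (n + 1) => min (i : ℕ) (n - 1)) :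
    Nonempty ((⊤ : SimpleGraph (Fin n)) ≃g rookEquivGraph B) := by
  obtain ⟨B, hBmono⟩ := B
  set t₀ : Fin n := ⟨n - 1, by omega⟩
  obtain rfl : B = dippedStaircase t₀ := hB.trans (dippedStaircase_eq_min hn).symm
  let v (t : Fin n) : {C : FerrersBoard (n + 1) // RookEquiv C.1 (dippedStaircase t₀)} :=
    ⟨⟨_, dippedStaircase_monotone t⟩,
      (rookEquiv_dippedStaircase_iff (dippedStaircase_monotone t) t₀).2 ⟨t, rfl⟩⟩
  have hv : Function.Bijective v := by
    refine ⟨fun s t hst => dippedStaircase_injective (congrArg (fun C => C.1.1) hst), ?_⟩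
    rintro ⟨⟨b, hb⟩, hbB⟩
    obtain ⟨s, rfl⟩ := (rookEquiv_dippedStaircase_iff hb t₀).1 hbB
    exact ⟨s, rfl⟩
  refine ⟨⟨Equiv.ofBijective v hv, fun {s t} => ?_⟩⟩
  simp only [rookEquivGraph, SimpleGraph.fromRel_adj, Equiv.ofBijective_apply,
    hv.injective.ne_iff, SimpleGraph.top_adj, and_iff_left_iff_imp]
  exact fun hst => Or.inl (movesSquares_dippedStaircase hst)
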